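/- arXiv:math-ph/0512037 — 3 statements merged into one kernel-verified Lean document; each statement's English description precedes it below -/
import Mathlib

section
/- The partial trace identity tr_2((A⊗I)(I⊗B)P^q) = A·B^{q⁻¹} holds for all N×N matrices A, B, where B^{q⁻¹} is the q⁻¹-deformation of B. -/
open Matrix Kronecker

noncomputable section

variable {K : Type*} [Field K]

/-- Elementary matrix `E i j` with a `1` in position `(i,j)`. -/
def Emat (N : ℕ) (i j : Fin N) : Matrix (Fin N) (Fin N) K :=
  Matrix.single i j 1

/-- The `q`-permutation operator
`P^q = Σ_i E_{ii}⊗E_{ii} + q Σ_{i>j} E_{ij}⊗E_{ji} + q⁻¹ Σ_{i<j} E_{ij}⊗E_{ji}`. -/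
def Pq (N : ℕ) (q : K) : Matrix (Fin N × Fin N) (Fin N × Fin N) K :=
  (∑ i : Fin N, Emat N i i ⊗ₖ Emat N i i)
    + q • ∑ i : Fin N, ∑ j : Fin N, (if j < i then Emat N i j ⊗ₖ Emat N j i else 0)
    + q⁻¹ • ∑ i : Fin N, ∑ j : Fin N, (if i < j then Emat N i j ⊗ₖ Emat N j i else 0)

/-- The (undeformed) permutation operator `P = Σ_{a,b} E_{ab}⊗E_{ba}`. -/
def Pperm (N : ℕ) : Matrix (Fin N × Fin N) (Fin N × Fin N) K :=
  ∑ a : Fin N, ∑ b : Fin N, Emat N a b ⊗ₖ Emat N b a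

/-- The constant `R`-matrix of `U_q(gl(N))`:
`R = q Σ_a E_{aa}⊗E_{aa} + Σ_{a≠b} E_{aa}⊗E_{bb} + (q−q⁻¹) Σ_{a<b} E_{ab}⊗E_{ba}`. -/
def Rconst (N : ℕ) (q : K) : Matrix (Fin N × Fin N) (Fin N × Fin N) K :=
  q • (∑ a : Fin N, Emat N a a ⊗ₖ Emat N a a)
    + (∑ a : Fin N, ∑ b : Fin N, (if a ≠ b then Emat N a a ⊗ₖ Emat N b b else 0))
    + (q - q⁻¹) • ∑ a : Fin N, ∑ b : Fin N, (if a < b then Emat N a b ⊗ₖ Emat N b a else 0)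

/-- `b(z) = z − z⁻¹`; note `a(z) = qz − q⁻¹z⁻¹ = bf (q*z)`. -/
def bf (z : K) : K := z - z⁻¹

/-- The spectral-parameter `R`-matrix `R(z) = b(z)(I⊗I − P^q) + a(z)P`. -/
def Rz (N : ℕ) (q z : K) : Matrix (Fin N × Fin N) (Fin N × Fin N) K :=
  bf z • ((1 : Matrix (Fin N × Fin N) (Fin N × Fin N) K) - Pq N q) + bf (q * z) • Pperm N

/-- `A ↦ A_{21} = P A P` : exchange the two tensor factors. -/
def sw {N : ℕ} {R : Type*} (A : Matrix (Fin N × Fin N) (Fin N × Fin N) R) :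
    Matrix (Fin N × Fin N) (Fin N × Fin N) R :=
  Matrix.of fun p r => A (p.2, p.1) (r.2, r.1)

/-- Partial transposition in the first tensor factor. -/
def pt1 {N : ℕ} {R : Type*} (A : Matrix (Fin N × Fin N) (Fin N × Fin N) R) :
    Matrix (Fin N × Fin N) (Fin N × Fin N) R :=
  Matrix.of fun p r => A (r.1, p.2) (p.1, r.2)

/-- Partial transposition in the second tensor factor. -/
def pt2 {N : ℕ} {R : Type*} (A : Matrix (Fin N × Fin N) (Fin N × Fin N) R) :
    Matrix (Fin N × Fin N) (Fin N × Fin N) R :=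
  Matrix.of fun p r => A (p.1, r.2) (r.1, p.2)

/-- Partial trace over the first tensor factor. -/
def ptr1 {N : ℕ} {R : Type*} [AddCommMonoid R]
    (A : Matrix (Fin N × Fin N) (Fin N × Fin N) R) : Matrix (Fin N) (Fin N) R :=
  Matrix.of fun i j => ∑ k : Fin N, A (k, i) (k, j)

/-- Partial trace over the second tensor factor. -/
def ptr2 {N : ℕ} {R : Type*} [AddCommMonoid R]
    (A : Matrix (Fin N × Fin N) (Fin N × Fin N) R) : Matrix (Fin N) (Fin N) R :=
  Matrix.of fun i j => ∑ k : Fin N, A (i, k) (j, k)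

/-- Embed an operator on `C^N ⊗ C^N` as acting on factors 1,2 of `C^N ⊗ C^N ⊗ C^N`. -/
def amp12 {N : ℕ} (A : Matrix (Fin N × Fin N) (Fin N × Fin N) K) :
    Matrix (Fin N × Fin N × Fin N) (Fin N × Fin N × Fin N) K :=
  Matrix.of fun p r => A (p.1, p.2.1) (r.1, r.2.1) * (if p.2.2 = r.2.2 then 1 else 0)

/-- Embed an operator on `C^N ⊗ C^N` as acting on factors 1,3 of `C^N ⊗ C^N ⊗ C^N`. -/
def amp13 {N : ℕ} (A : Matrix (Fin N × Fin N) (Fin N × Fin N) K) :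
    Matrix (Fin N × Fin N × Fin N) (Fin N × Fin N × Fin N) K :=
  Matrix.of fun p r => A (p.1, p.2.2) (r.1, r.2.2) * (if p.2.1 = r.2.1 then 1 else 0)

/-- Embed an operator on `C^N ⊗ C^N` as acting on factors 2,3 of `C^N ⊗ C^N ⊗ C^N`. -/
def amp23 {N : ℕ} (A : Matrix (Fin N × Fin N) (Fin N × Fin N) K) :
    Matrix (Fin N × Fin N × Fin N) (Fin N × Fin N × Fin N) K :=
  Matrix.of fun p r => (if p.1 = r.1 then 1 else 0) * A (p.2.1, p.2.2) (r.2.1, r.2.2)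

/-- The `q`-deformation of a matrix: `(A^q)_{ij} = q^{sgn(j-i)} A_{ij}`. -/
def deform {R : Type*} [Ring R] [Algebra K R] {N : ℕ} (q : K)
    (A : Matrix (Fin N) (Fin N) R) : Matrix (Fin N) (Fin N) R :=
  Matrix.of fun i j =>
    (q ^ (if i < j then (1 : ℤ) else if j < i then (-1 : ℤ) else 0)) • A i j

/-- The matrix `M = Σ_a θ₀ q^{N−2a+1} E_{aa}` (with 1-indexed `a`). -/
def Mθ (N : ℕ) (q θ : K) : Matrix (Fin N) (Fin N) K :=
  Matrix.diagonal fun a => θ * q ^ ((N : ℤ) - 2 * ((a : ℕ) : ℤ) - 1)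

/-! `(A ⊗ 1)(1 ⊗ B) = A ⊗ B`, and `P^q` is a weighted swap `Σ_{a,b} w_{ab} E_{ab} ⊗ E_{ba}` with
`w_{ab} = (q⁻¹)^{sgn(b-a)}`. Multiplying `A ⊗ B` by a weighted swap and tracing out the second
factor contracts the indices to `Σ_k A_{ik} B_{kj} w_{kj}`, and `B_{kj} w_{kj}` is exactly the
`(k, j)` entry of `B^{q⁻¹}`. -/

theorem kronecker_one_mul_one_kronecker {m n R : Type*} [Fintype m] [Fintype n]
    [DecidableEq m] [DecidableEq n] [Semiring R] (A : Matrix m m R) (B : Matrix n n R) :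
    (A ⊗ₖ (1 : Matrix n n R)) * ((1 : Matrix m m R) ⊗ₖ B) = A ⊗ₖ B := by
  ext ⟨i, k⟩ ⟨j, l⟩
  simp [Matrix.mul_apply, Fintype.sum_prod_type, Matrix.one_apply]

def weightedSwap {n R : Type*} [DecidableEq n] [Zero R] (w : n → n → R) :
    Matrix (n × n) (n × n) R :=
  Matrix.of fun p r => if p.1 = r.2 ∧ p.2 = r.1 then w p.1 p.2 else 0

theorem weightedSwap_map {n R S : Type*} [DecidableEq n] [Zero R] [Zero S] (w : n → n → R)
    (f : R → S) (hf : f 0 = 0) : (weightedSwap w).map f = weightedSwap fun a b => f (w a b) := by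
  ext p r
  simp [weightedSwap, apply_ite f, hf]

theorem ptr2_kronecker_mul_weightedSwap {N : ℕ} {R : Type*} [Semiring R]
    (A B : Matrix (Fin N) (Fin N) R) (w : Fin N → Fin N → R) :
    ptr2 ((A ⊗ₖ B) * weightedSwap w) = A * Matrix.of fun k j => B k j * w k j := by
  ext i j
  simp [ptr2, weightedSwap, Matrix.mul_apply, Fintype.sum_prod_type, mul_assoc, ite_and]

theorem Pq_eq_weightedSwap (N : ℕ) (q : K) :
    Pq N q = weightedSwap fun a b =>
      q⁻¹ ^ (if a < b then (1 : ℤ) else if b < a then (-1 : ℤ) else 0) := by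
  ext ⟨a, b⟩ ⟨c, d⟩
  simp only [Pq, Emat, weightedSwap, single_kronecker_single, mul_one, Matrix.add_apply,
    Matrix.sum_apply, single_apply, Prod.mk.injEq, ite_and, Finset.sum_ite_eq', Finset.mem_univ,
    if_true, Matrix.smul_apply, apply_ite (fun M : Matrix _ _ K => M (a, b) (c, d)),
    Matrix.zero_apply, smul_eq_mul, pow_ite, zpow_one, _root_.zpow_neg, inv_inv, of_apply]
  rw [Fintype.sum_eq_single d fun x hx => by simp [hx],
    Fintype.sum_eq_single c fun y hy => by simp [hy],
    Fintype.sum_eq_single d fun x hx => by simp [hx],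
    Fintype.sum_eq_single c fun y hy => by simp [hy]]
  by_cases had : a = d
  · by_cases hbc : b = c
    · subst had hbc
      rcases lt_trichotomy a b with h | rfl | h
      · simp [h, h.ne, h.not_gt]
      · simp
      · simp [h, h.ne', h.not_gt]
    · simp [hbc, Ne.symm hbc]
      rintro rfl rfl
      exact (hbc rfl).elim
  · simp [had, Ne.symm had]

theorem ptr2_Pq_general {R : Type*} [Ring R] [Algebra K R] (N : ℕ) (q : K)
    (A B : Matrix (Fin N) (Fin N) R) :
    ptr2 ((A ⊗ₖ (1 : Matrix (Fin N) (Fin N) R))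
        * ((1 : Matrix (Fin N) (Fin N) R) ⊗ₖ B)
        * ((Pq N q).map (algebraMap K R)))
      = A * deform q⁻¹ B := by
  rw [kronecker_one_mul_one_kronecker, Pq_eq_weightedSwap, weightedSwap_map _ _ (map_zero _),
    ptr2_kronecker_mul_weightedSwap]
  congr 1
  ext k j
  simp [deform, Algebra.smul_def, Algebra.commutes]

/-- partial trace identity `tr₂(A₁ B₂ P^q) = A · B^{q⁻¹}`. -/
theorem ptr2_Pq {R : Type*} [Ring R] [Algebra K R] (N : ℕ) (q : K) (hq : q ≠ 0)
    (A B : Matrix (Fin N) (Fin N) R) :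
    ptr2 ((A ⊗ₖ (1 : Matrix (Fin N) (Fin N) R))
        * ((1 : Matrix (Fin N) (Fin N) R) ⊗ₖ B)
        * ((Pq N q).map (algebraMap K R)))
      = A * deform q⁻¹ B :=
  ptr2_Pq_general N q A B

end
end

section
/- The spectral R-matrix is CP-invariant: for any invertible antidiagonal matrix U = Σ_a u_a E_{a,N+1−a}, one has R_{21}(z) = (U⊗U) R_{12}(z) (U⊗U)⁻¹. -/
open Matrix Kronecker

noncomputable section

variable {K : Type*} [Field K]

/-- An invertible antidiagonal matrix `U = Σ_a u_a E_{a, N+1−a}`. -/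
def antidiag (N : ℕ) (u : Fin N → K) : Matrix (Fin N) (Fin N) K :=
  Matrix.of fun i j => if j = Fin.rev i then u i else 0

/-! `R(z)` only connects `(a, b)` to `(c, d)` when `{a, b} = {c, d}`, so the weights `u_a` cancel
under conjugation by `U ⊗ U`. What remains is the reversal `a ↦ N + 1 − a` of all indices; it
reverses the order that decides between `q` and `q⁻¹` in `P^q`, which is exactly the effect of
exchanging the two tensor factors. -/

section

variable {N : ℕ}

theorem sum_Emat_kronecker_Emat_apply (p : Fin N → Fin N → Prop) [DecidableRel p]
    (a b c d : Fin N) :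
    (∑ i, ∑ j, if p i j then Emat N i j ⊗ₖ Emat N j i else 0 :
        Matrix (Fin N × Fin N) (Fin N × Fin N) K) (a, b) (c, d)
      = if a = d ∧ b = c ∧ p a b then 1 else 0 := by
  simp only [Matrix.sum_apply, Matrix.ite_apply, kronecker_apply, Emat, single_apply,
    Matrix.zero_apply]
  rw [Fintype.sum_eq_single a, Fintype.sum_eq_single b]
  · grind
  · intro j hj; simp [hj]
  · intro i hi; simp [hi]

theorem sum_Emat_kronecker_Emat_diag_apply (a b c d : Fin N) :
    (∑ i, Emat N i i ⊗ₖ Emat N i i : Matrix (Fin N × Fin N) (Fin N × Fin N) K) (a, b) (c, d)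
      = if a = b ∧ a = c ∧ a = d then 1 else 0 := by
  simp only [Matrix.sum_apply, kronecker_apply, Emat, single_apply]
  rw [Fintype.sum_eq_single a]
  · grind
  · intro i hi; simp [hi]

theorem Pperm_apply (a b c d : Fin N) :
    (Pperm N : Matrix (Fin N × Fin N) (Fin N × Fin N) K) (a, b) (c, d)
      = if a = d ∧ b = c then 1 else 0 := by
  simp [Pperm, Emat, Matrix.sum_apply, Matrix.single_apply, ite_and, eq_comm]

theorem Pq_apply (q : K) (a b c d : Fin N) :
    Pq N q (a, b) (c, d)
      = if a = d ∧ b = c then (if a = b then 1 else if b < a then q else q⁻¹) else 0 := by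
  simp only [Pq, Matrix.add_apply, Matrix.smul_apply, sum_Emat_kronecker_Emat_apply,
    sum_Emat_kronecker_Emat_diag_apply, smul_eq_mul]
  split_ifs <;> grind

theorem eq_or_eq_of_Rz_apply_ne_zero (q z : K) (a b c d : Fin N)
    (h : Rz N q z (a, b) (c, d) ≠ 0) : a = c ∧ b = d ∨ a = d ∧ b = c := by
  by_contra hne
  rw [not_or] at hne
  simp [Rz, Pq_apply, Pperm_apply, one_apply, hne.1, hne.2] at h

theorem Rz_apply_rev (q z : K) (a b c d : Fin N) :
    Rz N q z (a.rev, b.rev) (c.rev, d.rev) = Rz N q z (b, a) (d, c) := by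
  simp only [Rz, Matrix.add_apply, Matrix.smul_apply, Matrix.sub_apply, one_apply, Prod.mk.injEq,
    Pq_apply, Pperm_apply, Fin.rev_inj, Fin.rev_lt_rev]
  grind

theorem antidiag_mul_antidiag (u v : Fin N → K) :
    antidiag N u * antidiag N v = diagonal fun i => u i * v i.rev := by
  ext i k
  by_cases h : i = k <;>
    simp [antidiag, mul_apply, eq_comm (a := k), Fin.rev_eq_iff, h]

theorem isUnit_det_antidiag {u : Fin N → K} (hu : ∀ a, u a ≠ 0) : IsUnit (antidiag N u).det := by
  refine isUnit_det_of_right_inverse (B := antidiag N fun i => (u i.rev)⁻¹) ?_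
  rw [antidiag_mul_antidiag, ← diagonal_one]
  congr 1; ext i; simp [hu]

theorem kronecker_antidiag_mul_apply {ι : Type*} (u v : Fin N → K) (A : Matrix (Fin N × Fin N) ι K)
    (i j : Fin N) (r : ι) :
    ((antidiag N u ⊗ₖ antidiag N v) * A) (i, j) r = u i * v j * A (i.rev, j.rev) r := by
  simp [mul_apply, Fintype.sum_prod_type, antidiag, ite_mul]

theorem mul_kronecker_antidiag_apply {ι : Type*} (u v : Fin N → K) (A : Matrix ι (Fin N × Fin N) K)
    (p : ι) (k l : Fin N) :
    (A * (antidiag N u ⊗ₖ antidiag N v)) p (k, l) = A p (k.rev, l.rev) * (u k.rev * v l.rev) := by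
  simp [mul_apply, Fintype.sum_prod_type, antidiag, eq_comm (a := k), eq_comm (a := l),
    Fin.rev_eq_iff]

theorem sw_mul_kronecker_antidiag {A : Matrix (Fin N × Fin N) (Fin N × Fin N) K} (u : Fin N → K)
    (hA : ∀ a b c d, A (a, b) (c, d) ≠ 0 → a = c ∧ b = d ∨ a = d ∧ b = c)
    (hA_rev : ∀ a b c d, A (a.rev, b.rev) (c.rev, d.rev) = A (b, a) (d, c)) :
    sw A * (antidiag N u ⊗ₖ antidiag N u) = (antidiag N u ⊗ₖ antidiag N u) * A := by
  ext ⟨i, j⟩ ⟨k, l⟩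
  rw [mul_kronecker_antidiag_apply, kronecker_antidiag_mul_apply, sw, of_apply,
    ← hA_rev i j k.rev l.rev, Fin.rev_rev, Fin.rev_rev]
  by_cases h : A (i.rev, j.rev) (k, l) = 0
  · simp [h]
  · rcases hA _ _ _ _ h with ⟨rfl, rfl⟩ | ⟨rfl, rfl⟩ <;> simp only [Fin.rev_rev] <;> ring

end

theorem Rz_CP_general (N : ℕ) (q z : K)
    (u : Fin N → K) (hu : ∀ a, u a ≠ 0) :
    sw (Rz N q z)
      = (antidiag N u ⊗ₖ antidiag N u) * Rz N q z * (antidiag N u ⊗ₖ antidiag N u)⁻¹ := by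
  have hU : IsUnit (antidiag N u ⊗ₖ antidiag N u).det := by
    rw [det_kronecker]
    exact ((isUnit_det_antidiag hu).pow _).mul ((isUnit_det_antidiag hu).pow _)
  have hintertwine :=
    sw_mul_kronecker_antidiag u (eq_or_eq_of_Rz_apply_ne_zero q z) (Rz_apply_rev q z)
  rw [← hintertwine, mul_nonsing_inv_cancel_right _ _ hU]

/-- CP-invariance: `R₂₁(z) = (U⊗U) R₁₂(z) (U⊗U)⁻¹` for any
invertible antidiagonal `U`. -/
theorem Rz_CP (N : ℕ) (q z : K) (hq : q ≠ 0) (hz : z ≠ 0)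
    (u : Fin N → K) (hu : ∀ a, u a ≠ 0) :
    sw (Rz N q z)
      = (antidiag N u ⊗ₖ antidiag N u) * Rz N q z * (antidiag N u ⊗ₖ antidiag N u)⁻¹ :=
  Rz_CP_general N q z u hu

end
end

section
/- The transposed R-matrix identity holds: (R_{12}⁻¹)^{t₁} = M₁⁻¹ (R_{12}^{t₁})⁻¹ M₁, where M = Σ_a θ₀ q^{N−2a+1} E_{aa} with θ₀ = ±1, and t₁ denotes partial transposition in the first tensor factor. -/
open Matrix Kronecker

noncomputable section

variable {K : Type*} [Field K]

/-!
Write `R = D + (q - q⁻¹) X` with `X = Σ_{a<b} E_ab ⊗ E_ba`, where `D` is `q` on the vectors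
`e_a ⊗ e_a` and the identity on the other basis vectors. As `X² = 0` and `D X = X D = X`,
`R⁻¹ = D⁻¹ - (q - q⁻¹) X`. Partial transposition fixes `D` and sends `X` to `Σ_{k<i} E_ik ⊗ E_ik`,
which lives on the span of the `e_a ⊗ e_a`. There `R^{t₁}` and `(R⁻¹)^{t₁}` act as the `N × N`
matrices `q + (q - q⁻¹) L` and `q⁻¹ - (q - q⁻¹) L`, with `L` the strictly lower triangular matrix
of ones. The inverse of the first is `q⁻¹ - (q - q⁻¹) G` with `G_ik = q^(2(k-i))` for `k < i`
(a telescoping geometric sum), and conjugation by the diagonal matrix `M` turns `G` into `L`.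
-/

theorem add_mul_sub_eq_one {R : Type*} [Ring R] {a b x : R} (hab : a * b = 1)
    (hax : a * x = x) (hxb : x * b = x) (hxx : x * x = 0) : (a + x) * (b - x) = 1 := by
  rw [add_mul, mul_sub, mul_sub, hab, hax, hxb, hxx]; abel

section liftDiag

variable {n α : Type*} [DecidableEq n]

def liftDiag [Zero α] (A : Matrix n n α) : Matrix (n × n) (n × n) α :=
  Matrix.of fun p r => if p.1 = p.2 ∧ r.1 = r.2 then A p.1 r.1 else 0

theorem liftDiag_add [AddZeroClass α] (A B : Matrix n n α) :
    liftDiag (A + B) = liftDiag A + liftDiag B := by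
  ext p r; simp only [liftDiag, of_apply, Matrix.add_apply]; split_ifs <;> simp

theorem liftDiag_sub [SubNegZeroMonoid α] (A B : Matrix n n α) :
    liftDiag (A - B) = liftDiag A - liftDiag B := by
  ext p r; simp only [liftDiag, of_apply, Matrix.sub_apply]; split_ifs <;> simp

theorem liftDiag_smul {R : Type*} [Zero α] [SMulZeroClass R α] (c : R) (A : Matrix n n α) :
    liftDiag (c • A) = c • liftDiag A := by
  ext p r; simp only [liftDiag, of_apply, Matrix.smul_apply]; split_ifs <;> simp

theorem liftDiag_mul_liftDiag [Fintype n] [NonUnitalNonAssocSemiring α] (A B : Matrix n n α) :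
    liftDiag A * liftDiag B = liftDiag (A * B) := by
  ext ⟨i, j⟩ ⟨k, l⟩
  simp only [liftDiag, mul_apply, of_apply, Fintype.sum_prod_type, ite_and, ite_mul, zero_mul,
    mul_ite, mul_zero]
  split_ifs <;> simp_all

theorem diagonal_mul_liftDiag [Fintype n] [NonUnitalNonAssocSemiring α] (d : n × n → α)
    (A : Matrix n n α) : diagonal d * liftDiag A = liftDiag (diagonal (fun a => d (a, a)) * A) := by
  ext ⟨i, j⟩ ⟨k, l⟩
  simp only [liftDiag, diagonal_mul, of_apply]
  split_ifs <;> simp_all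

theorem liftDiag_mul_diagonal [Fintype n] [NonUnitalNonAssocSemiring α] (d : n × n → α)
    (A : Matrix n n α) : liftDiag A * diagonal d = liftDiag (A * diagonal (fun a => d (a, a))) := by
  ext ⟨i, j⟩ ⟨k, l⟩
  simp only [liftDiag, mul_diagonal, of_apply]
  split_ifs <;> simp_all

variable [Ring α]

/-- The operator acting as `A` on the span of the diagonal basis vectors `e_a ⊗ e_a` and as the
identity on the span of the `e_a ⊗ e_b`, `a ≠ b`. -/
def diagBlock (A : Matrix n n α) : Matrix (n × n) (n × n) α :=
  1 - liftDiag 1 + liftDiag A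

theorem diagBlock_add_liftDiag (A B : Matrix n n α) :
    diagBlock A + liftDiag B = diagBlock (A + B) := by
  rw [diagBlock, diagBlock, liftDiag_add, add_assoc]

theorem diagBlock_sub_liftDiag (A B : Matrix n n α) :
    diagBlock A - liftDiag B = diagBlock (A - B) := by
  rw [diagBlock, diagBlock, liftDiag_sub, add_sub_assoc]

theorem diagBlock_one : diagBlock (1 : Matrix n n α) = 1 :=
  sub_add_cancel 1 _

variable [Fintype n]

theorem diagBlock_mul_diagBlock (A B : Matrix n n α) :
    diagBlock A * diagBlock B = diagBlock (A * B) := by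
  simp only [diagBlock, add_mul, mul_add, sub_mul, mul_sub, one_mul, mul_one,
    liftDiag_mul_liftDiag]
  abel

theorem diagonal_mul_diagBlock_mul_diagonal {m m' : n → α} (hm : ∀ a, m' a * m a = 1)
    (A : Matrix n n α) :
    diagonal (fun p : n × n => m' p.1) * diagBlock A * diagonal (fun p => m p.1)
      = diagBlock (diagonal m' * A * diagonal m) := by
  have hdiag : diagonal m' * diagonal m = 1 := by
    rw [diagonal_mul_diagonal, ← diagonal_one]; exact congrArg diagonal (funext hm)
  have hdiag₁ : diagonal (fun p : n × n => m' p.1) * diagonal (fun p => m p.1) = 1 := by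
    rw [diagonal_mul_diagonal, ← diagonal_one]; exact congrArg diagonal (funext fun p => hm p.1)
  simp only [diagBlock, mul_add, add_mul, mul_sub, sub_mul, Matrix.mul_one, hdiag₁,
    diagonal_mul_liftDiag, liftDiag_mul_diagonal, hdiag]

theorem diagonal_kronecker_one_mul_diagBlock_mul {m m' : n → α} (hm : ∀ a, m' a * m a = 1)
    (A : Matrix n n α) :
    (diagonal m' ⊗ₖ (1 : Matrix n n α)) * diagBlock A * (diagonal m ⊗ₖ 1)
      = diagBlock (diagonal m' * A * diagonal m) := by
  rw [← diagonal_one, diagonal_kronecker_diagonal, diagonal_kronecker_diagonal]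
  simp only [mul_one]
  exact diagonal_mul_diagBlock_mul_diagonal hm A

end liftDiag

section swapUpper

variable {n α : Type*} [LinearOrder n]

def swapUpper [Zero α] [One α] : Matrix (n × n) (n × n) α :=
  Matrix.of fun p r => if p.1 < p.2 ∧ r = p.swap then 1 else 0

def strictLowerOnes [Zero α] [One α] : Matrix n n α :=
  Matrix.of fun i k => if k < i then 1 else 0

variable [Fintype n]

theorem swapUpper_mul_swapUpper [NonAssocSemiring α] :
    (swapUpper : Matrix (n × n) (n × n) α) * swapUpper = 0 := by
  ext p r
  simp only [swapUpper, mul_apply, of_apply, Matrix.zero_apply, ite_mul, one_mul, zero_mul]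
  refine Finset.sum_eq_zero fun s _ => ?_
  split_ifs with h₁ h₂
  · rw [h₁.2] at h₂; exact absurd h₁.1 h₂.1.not_gt
  all_goals rfl

theorem liftDiag_mul_swapUpper [NonAssocSemiring α] (A : Matrix n n α) :
    liftDiag A * swapUpper = 0 := by
  ext p r
  simp only [liftDiag, swapUpper, mul_apply, of_apply, Matrix.zero_apply]
  refine Finset.sum_eq_zero fun s _ => ?_
  split_ifs <;> simp_all

theorem swapUpper_mul_liftDiag [NonAssocSemiring α] (A : Matrix n n α) :
    swapUpper * liftDiag A = 0 := by
  ext p r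
  simp only [liftDiag, swapUpper, mul_apply, of_apply, Matrix.zero_apply]
  refine Finset.sum_eq_zero fun s _ => ?_
  split_ifs <;> simp_all

theorem diagBlock_mul_swapUpper [Ring α] (A : Matrix n n α) :
    diagBlock A * swapUpper = swapUpper := by
  rw [diagBlock, add_mul, sub_mul, Matrix.one_mul, liftDiag_mul_swapUpper,
    liftDiag_mul_swapUpper, sub_zero, add_zero]

theorem swapUpper_mul_diagBlock [Ring α] (A : Matrix n n α) :
    swapUpper * diagBlock A = swapUpper := by
  rw [diagBlock, mul_add, mul_sub, Matrix.mul_one, swapUpper_mul_liftDiag,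
    swapUpper_mul_liftDiag, sub_zero, add_zero]

end swapUpper

theorem sum_Emat_kronecker_Emat_self (N : ℕ) :
    ∑ a : Fin N, Emat N a a ⊗ₖ Emat N a a = (liftDiag 1 : Matrix _ _ K) := by
  ext ⟨i, j⟩ ⟨k, l⟩
  simp only [Emat, single_kronecker_single, Matrix.sum_apply, single_apply, liftDiag, of_apply,
    one_apply, Prod.mk.injEq, mul_one]
  rw [Finset.sum_eq_single i] <;> grind

theorem sum_Emat_kronecker_Emat_of_ne (N : ℕ) :
    ∑ a : Fin N, ∑ b : Fin N, (if a ≠ b then Emat N a a ⊗ₖ Emat N b b else 0)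
      = (1 - liftDiag 1 : Matrix _ _ K) := by
  ext ⟨i, j⟩ ⟨k, l⟩
  simp only [Emat, single_kronecker_single, Matrix.sum_apply, ne_eq, Matrix.ite_apply,
    Matrix.zero_apply, single_apply, liftDiag, of_apply, one_apply, Prod.mk.injEq, mul_one,
    Matrix.sub_apply]
  rw [← Fintype.sum_prod_type', Fintype.sum_eq_single (i, j)] <;> grind

theorem sum_Emat_kronecker_Emat_of_lt (N : ℕ) :
    ∑ a : Fin N, ∑ b : Fin N, (if a < b then Emat N a b ⊗ₖ Emat N b a else 0)
      = (swapUpper : Matrix _ _ K) := by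
  ext ⟨i, j⟩ ⟨k, l⟩
  simp only [Emat, single_kronecker_single, Matrix.sum_apply, Matrix.ite_apply,
    Matrix.zero_apply, single_apply, swapUpper, of_apply, Prod.mk.injEq, mul_one,
    Prod.swap_prod_mk]
  rw [← Fintype.sum_prod_type', Fintype.sum_eq_single (i, j)] <;> grind

theorem Rconst_eq (N : ℕ) (q : K) :
    Rconst N q = diagBlock (q • 1) + (q - q⁻¹) • swapUpper := by
  rw [Rconst, sum_Emat_kronecker_Emat_self, sum_Emat_kronecker_Emat_of_ne,
    sum_Emat_kronecker_Emat_of_lt, diagBlock, liftDiag_smul]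
  abel

theorem Rconst_inv {N : ℕ} {q : K} (hq : q ≠ 0) :
    (Rconst N q)⁻¹ = diagBlock (q⁻¹ • 1) - (q - q⁻¹) • swapUpper := by
  refine inv_eq_right_inv ?_
  rw [Rconst_eq]
  refine add_mul_sub_eq_one ?_ ?_ ?_ ?_
  · rw [diagBlock_mul_diagBlock, smul_mul_smul_comm, Matrix.one_mul, mul_inv_cancel₀ hq,
      one_smul, diagBlock_one]
  · rw [Matrix.mul_smul, diagBlock_mul_swapUpper]
  · rw [Matrix.smul_mul, swapUpper_mul_diagBlock]
  · rw [Matrix.smul_mul, Matrix.mul_smul, swapUpper_mul_swapUpper, smul_zero, smul_zero]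

section pt1

variable {N : ℕ} {α : Type*}

theorem pt1_add [Add α] (A B : Matrix (Fin N × Fin N) (Fin N × Fin N) α) :
    pt1 (A + B) = pt1 A + pt1 B := rfl

theorem pt1_sub [Sub α] (A B : Matrix (Fin N × Fin N) (Fin N × Fin N) α) :
    pt1 (A - B) = pt1 A - pt1 B := rfl

theorem pt1_smul {R : Type*} [SMul R α] (c : R) (A : Matrix (Fin N × Fin N) (Fin N × Fin N) α) :
    pt1 (c • A) = c • pt1 A := rfl

theorem pt1_diagBlock_diagonal [Ring α] (d : Fin N → α) :
    pt1 (diagBlock (diagonal d)) = diagBlock (diagonal d) := by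
  ext ⟨i, j⟩ ⟨k, l⟩
  simp only [pt1, diagBlock, liftDiag, of_apply, Matrix.add_apply, Matrix.sub_apply, one_apply,
    diagonal_apply, Prod.mk.injEq]
  split_ifs <;> grind

theorem pt1_swapUpper [Zero α] [One α] :
    pt1 (swapUpper : Matrix (Fin N × Fin N) (Fin N × Fin N) α) = liftDiag strictLowerOnes := by
  ext ⟨i, j⟩ ⟨k, l⟩
  simp only [pt1, swapUpper, liftDiag, strictLowerOnes, of_apply, Prod.swap_prod_mk,
    Prod.mk.injEq]
  split_ifs <;> grind

end pt1

theorem pt1_Rconst (N : ℕ) (q : K) :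
    pt1 (Rconst N q) = diagBlock (q • 1 + (q - q⁻¹) • strictLowerOnes) := by
  rw [Rconst_eq, pt1_add, pt1_smul, smul_one_eq_diagonal, pt1_diagBlock_diagonal, pt1_swapUpper,
    ← liftDiag_smul, diagBlock_add_liftDiag]

theorem pt1_Rconst_inv {N : ℕ} {q : K} (hq : q ≠ 0) :
    pt1 (Rconst N q)⁻¹ = diagBlock (q⁻¹ • 1 - (q - q⁻¹) • strictLowerOnes) := by
  rw [Rconst_inv hq, pt1_sub, pt1_smul, smul_one_eq_diagonal, pt1_diagBlock_diagonal,
    pt1_swapUpper, ← liftDiag_smul, diagBlock_sub_liftDiag]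

theorem sub_inv_mul_sum_Ico_zpow {q : K} (hq : q ≠ 0) {k i : ℕ} (hki : k < i) :
    (q - q⁻¹) * ∑ a ∈ Finset.Ico (k + 1) i, q ^ (2 * ((a : ℤ) - i))
      = q⁻¹ - q ^ (2 * ((k : ℤ) - i) + 1) := by
  have step (e : ℤ) : (q - q⁻¹) * q ^ e = q ^ (e + 1) - q ^ (e - 1) := by
    rw [zpow_add_one₀ hq, zpow_sub_one₀ hq]; ring
  rw [Finset.mul_sum]
  convert Finset.sum_Ico_sub (fun a : ℕ => q ^ (2 * ((a : ℤ) - i) - 1)) (Nat.succ_le_of_lt hki)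
    using 1
  · refine Finset.sum_congr rfl fun a _ => ?_
    rw [step]; push_cast; ring_nf
  · push_cast; ring_nf; rw [_root_.zpow_neg_one]; ring

section geomLower

variable {N : ℕ}

def geomLower (q : K) : Matrix (Fin N) (Fin N) K :=
  Matrix.of fun i k => if k < i then q ^ (2 * (((k : ℕ) : ℤ) - (i : ℕ))) else 0

theorem geomLower_mul_strictLowerOnes_apply (q : K) (i k : Fin N) :
    (geomLower q * strictLowerOnes : Matrix (Fin N) (Fin N) K) i k
      = ∑ a ∈ Finset.Ico ((k : ℕ) + 1) i, q ^ (2 * ((a : ℤ) - (i : ℕ))) := by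
  simp only [mul_apply, geomLower, strictLowerOnes, of_apply, mul_ite, mul_one, mul_zero,
    Fin.lt_def]
  rw [Fin.sum_univ_eq_sum_range (fun a => if (k : ℕ) < a then
    (if a < i then q ^ (2 * ((a : ℤ) - (i : ℕ))) else 0) else 0), ← Finset.sum_filter,
    ← Finset.sum_filter, Finset.filter_filter]
  congr 1
  ext a
  simp only [Finset.mem_filter, Finset.mem_range, Finset.mem_Ico]
  omega

theorem smul_geomLower_mul_strictLowerOnes {q : K} (hq : q ≠ 0) :
    (q - q⁻¹) • (geomLower q * strictLowerOnes : Matrix (Fin N) (Fin N) K)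
      = q⁻¹ • strictLowerOnes - q • geomLower q := by
  ext i k
  rw [Matrix.smul_apply, geomLower_mul_strictLowerOnes_apply]
  simp only [Matrix.sub_apply, Matrix.smul_apply, geomLower, strictLowerOnes, of_apply, smul_eq_mul]
  split_ifs with hki
  · rw [sub_inv_mul_sum_Ico_zpow hq hki, zpow_add_one₀ hq]; ring
  · rw [Finset.Ico_eq_empty (by rw [Fin.lt_def] at hki; omega)]; simp

theorem geomLower_left_inverse {q : K} (hq : q ≠ 0) :
    (q⁻¹ • 1 - (q - q⁻¹) • geomLower q) * (q • 1 + (q - q⁻¹) • strictLowerOnes)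
      = (1 : Matrix (Fin N) (Fin N) K) := by
  rw [sub_mul, mul_add, mul_add, smul_mul_smul_comm, smul_mul_smul_comm, smul_mul_smul_comm,
    smul_mul_smul_comm, inv_mul_cancel₀ hq, one_smul, mul_one, one_mul, mul_one]
  linear_combination (norm := module) (-(q - q⁻¹)) • smul_geomLower_mul_strictLowerOnes hq

end geomLower

theorem inv_pt1_Rconst {N : ℕ} {q : K} (hq : q ≠ 0) :
    (pt1 (Rconst N q))⁻¹ = diagBlock (q⁻¹ • 1 - (q - q⁻¹) • geomLower q) :=
  inv_eq_left_inv <| by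
    rw [pt1_Rconst, diagBlock_mul_diagBlock, geomLower_left_inverse hq, diagBlock_one]

section diagonal

variable {n : Type*} [Fintype n] [DecidableEq n] {v : n → K}

theorem diagonal_inv_mul_diagonal (hv : ∀ i, v i ≠ 0) :
    (diagonal fun i => (v i)⁻¹) * diagonal v = 1 := by
  rw [diagonal_mul_diagonal, ← diagonal_one]
  exact congrArg diagonal (funext fun i => inv_mul_cancel₀ (hv i))

theorem inv_diagonal_of_ne_zero (hv : ∀ i, v i ≠ 0) : (diagonal v)⁻¹ = diagonal fun i => (v i)⁻¹ :=
  inv_eq_left_inv (diagonal_inv_mul_diagonal hv)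

end diagonal

theorem diagonal_inv_mul_geomLower_mul_diagonal {N : ℕ} {q θ : K} (hq : q ≠ 0) (hθ : θ ≠ 0)
    (e : ℤ) :
    diagonal (fun a : Fin N => (θ * q ^ (e - 2 * (a : ℕ)))⁻¹) * geomLower q
      * diagonal (fun a : Fin N => θ * q ^ (e - 2 * (a : ℕ))) = strictLowerOnes := by
  ext i k
  simp only [diagonal_mul, mul_diagonal, geomLower, strictLowerOnes, of_apply]
  split_ifs
  · rw [mul_assoc, inv_mul_eq_one₀ (mul_ne_zero hθ (zpow_ne_zero _ hq)), mul_left_comm,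
      ← zpow_add₀ hq]
    ring_nf
  · simp

/-- `(R₁₂⁻¹)^{t₁} = M₁⁻¹ (R₁₂^{t₁})⁻¹ M₁`. -/
theorem Rconst_inv_pt1 (N : ℕ) (q θ : K) (hq : q ≠ 0) (hθ : θ = 1 ∨ θ = -1) :
    pt1 ((Rconst N q)⁻¹)
      = (Mθ N q θ ⊗ₖ (1 : Matrix (Fin N) (Fin N) K))⁻¹
          * (pt1 (Rconst N q))⁻¹ * (Mθ N q θ ⊗ₖ (1 : Matrix (Fin N) (Fin N) K)) := by
  have hθ0 : θ ≠ 0 := by rcases hθ with rfl | rfl <;> norm_num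
  set m : Fin N → K := fun a => θ * q ^ ((N : ℤ) - 1 - 2 * (a : ℕ)) with hm_def
  have hMθ : Mθ N q θ = diagonal m := by simp only [Mθ, m, sub_right_comm]
  have hm (a : Fin N) : m a ≠ 0 := mul_ne_zero hθ0 (zpow_ne_zero _ hq)
  rw [pt1_Rconst_inv hq, inv_pt1_Rconst hq, inv_kronecker, inv_one, hMθ, inv_diagonal_of_ne_zero hm,
    diagonal_kronecker_one_mul_diagBlock_mul fun a => inv_mul_cancel₀ (hm a)]
  congr 1
  rw [mul_sub, sub_mul, Matrix.mul_smul, Matrix.mul_smul, Matrix.smul_mul, Matrix.smul_mul,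
    Matrix.mul_one, diagonal_inv_mul_diagonal hm, hm_def,
    diagonal_inv_mul_geomLower_mul_diagonal hq hθ0]

end
end
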